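/- arXiv:1803.01418 — 6 statements merged into one kernel-verified Lean document; each statement's English description precedes it below -/
import Mathlib

section
/- For every ordinal λ > 0, the ordinal 1 is the unique x < ω^ω^λ such that x·x = x and there exists y < ω^ω^λ with x·y ≠ x. -/
open Ordinal

theorem one_unique_characterization_general (l : Ordinal) (x : Ordinal) :
    (x * x = x ∧ ∃ y : Ordinal, y < ω ^ ω ^ l ∧ x * y ≠ x) ↔ x = 1 := by
  constructor
  · rintro ⟨hxx, y, -, hxy⟩
    obtain h | rfl := mul_right_eq_self₀.mp hxx
    · exact h
    · exact absurd (zero_mul y) hxy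
  · rintro rfl
    exact ⟨one_mul 1, 0, opow_pos _ omega0_pos, by simp⟩

theorem one_unique_characterization (l : Ordinal) (hl : 0 < l) (x : Ordinal)
    (hx : x < ω ^ ω ^ l) :
    (x * x = x ∧ ∃ y : Ordinal, y < ω ^ ω ^ l ∧ x * y ≠ x) ↔ x = 1 :=
  one_unique_characterization_general l x
end

section
/- The ordinal ω + 1 is the unique successor ordinal p such that p is multiplicatively prime, p ≠ ω, and p·ω = ω². -/
/-!
Since `p * ω = ω * ω` and `p` is neither finite nor `ω`, we get `ω < p < ω * ω` (`ω * ω`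
is not prime), so `p = ω * m + n` with `m, n` finite. A prime of this shape has `m = 1`,
because `ω * m + n = (ω + n) * m`, and then `n = 1`, because `ω + n = n * (ω + 1)` for `n ≠ 0`.
Conversely, a factorization of `ω + 1` into smaller factors is impossible: a factor equal to
`ω` makes the product a limit or zero, and finite factors give a finite product.
-/

open Ordinal

/-- An ordinal `p > 1` is multiplicatively prime if it cannot be written as a
product of two ordinals each strictly less than `p`. -/
def OrdinalPrime (p : Ordinal) : Prop :=
  1 < p ∧ ¬∃ β γ : Ordinal, β < p ∧ γ < p ∧ p = β * γ

namespace Ordinal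

theorem omega0_opow_two : ω ^ (2 : Ordinal) = ω * ω := by
  rw [← Nat.cast_ofNat, opow_natCast, pow_two]

theorem add_mul_natCast_of_add_eq {a b : Ordinal} (h : b + a = a) {m : ℕ} (hm : m ≠ 0) :
    (a + b) * m = a * m + b := by
  induction m with
  | zero => exact absurd rfl hm
  | succ k ih =>
    rcases eq_or_ne k 0 with rfl | hk
    · simp
    · rw [Nat.cast_succ, mul_add_one, mul_add_one, ih hk, add_assoc, add_assoc, ← add_assoc b, h]

theorem exists_eq_omega0_mul_add_of_lt {p : Ordinal} (h : p < ω * ω) :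
    ∃ m n : ℕ, p = ω * m + n := by
  obtain ⟨m, hm⟩ := lt_omega0.1 ((lt_mul_iff_div_lt omega0_ne_zero).1 h)
  obtain ⟨n, hn⟩ := lt_omega0.1 (mod_lt p omega0_ne_zero)
  exact ⟨m, n, by rw [← hm, ← hn, div_add_mod]⟩

theorem omega0_le_of_mul_omega0_eq {p : Ordinal} (hp : 0 < p) (h : p * ω = ω * ω) : ω ≤ p := by
  by_contra! hlt
  rw [mul_omega0 hp hlt] at h
  exact (lt_mul_of_one_lt_right omega0_pos one_lt_omega0).ne h

end Ordinal

theorem ordinalPrime_omega0_add_one : OrdinalPrime (ω + 1) := by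
  refine ⟨one_lt_omega0.trans (lt_add_one ω), ?_⟩
  rintro ⟨β, γ, hβ, hγ, h⟩
  rw [Order.lt_add_one_iff] at hβ hγ
  rcases hγ.eq_or_lt with rfl | hγ
  · exact Order.not_isSuccPrelimit_add_one ω (h ▸ isSuccPrelimit_mul_right isSuccLimit_omega0)
  rcases hβ.eq_or_lt with rfl | hβ
  · exact Order.not_isSuccPrelimit_add_one ω (h ▸ isSuccPrelimit_mul_left isSuccLimit_omega0)
  exact (lt_add_one ω).not_gt (h ▸ isPrincipal_mul_omega0 hβ hγ)

theorem not_ordinalPrime_omega0_add_natCast {n : ℕ} (hn : 2 ≤ n) : ¬OrdinalPrime (ω + n) := by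
  refine fun hp ↦ hp.2 ⟨n, ω + 1, (natCast_lt_omega0 n).trans_le le_self_add, ?_, ?_⟩
  · exact (add_lt_add_iff_left ω).2 (by exact_mod_cast (by omega : 1 < n))
  · rw [mul_add_one, natCast_mul_omega0 (by omega)]

theorem not_ordinalPrime_omega0_mul_add_natCast {m : ℕ} (hm : 2 ≤ m) (n : ℕ) :
    ¬OrdinalPrime (ω * m + n) := by
  have hωm : ω < ω * m := lt_mul_of_one_lt_right omega0_pos (by exact_mod_cast hm)
  refine fun hp ↦ hp.2 ⟨ω + n, m, ?_, (natCast_lt_omega0 m).trans (hωm.trans_le le_self_add),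
    (add_mul_natCast_of_add_eq (add_omega0 (natCast_lt_omega0 n)) (by omega)).symm⟩
  calc ω + n < ω + ω := (add_lt_add_iff_left ω).2 (natCast_lt_omega0 n)
    _ = ω * 2 := by rw [← one_add_one_eq_two, mul_add_one, mul_one]
    _ ≤ ω * m := by gcongr; exact_mod_cast hm
    _ ≤ ω * m + n := le_self_add

theorem OrdinalPrime.eq_omega0_add_one {p : Ordinal} (hp : OrdinalPrime p) (hωp : ω < p)
    (hp2 : p < ω * ω) : p = ω + 1 := by
  obtain ⟨m, n, rfl⟩ := exists_eq_omega0_mul_add_of_lt hp2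
  obtain rfl | rfl | hm : m = 0 ∨ m = 1 ∨ 2 ≤ m := by omega
  · simp only [Nat.cast_zero, mul_zero, zero_add] at hωp
    exact absurd hωp (natCast_lt_omega0 n).not_gt
  · rw [Nat.cast_one, mul_one] at hp hωp ⊢
    obtain rfl | rfl | hn : n = 0 ∨ n = 1 ∨ 2 ≤ n := by omega
    · simp at hωp
    · simp
    · exact absurd hp (not_ordinalPrime_omega0_add_natCast hn)
  · exact absurd hp (not_ordinalPrime_omega0_mul_add_natCast hm n)

theorem omega_add_one_unique (p : Ordinal) :
    ((∃ δ : Ordinal, p = δ + 1) ∧ OrdinalPrime p ∧ p ≠ ω ∧ p * ω = ω ^ (2 : Ordinal))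
      ↔ p = ω + 1 := by
  rw [omega0_opow_two]
  constructor
  · rintro ⟨-, hp, hpω, hmul⟩
    have hωp : ω < p :=
      (omega0_le_of_mul_omega0_eq (zero_lt_one.trans hp.1) hmul).lt_of_ne' hpω
    have hp2 : p < ω * ω := by
      refine ((le_mul_left p omega0_pos).trans_eq hmul).lt_of_ne ?_
      rintro rfl
      have hωω : ω < ω * ω := lt_mul_of_one_lt_right omega0_pos one_lt_omega0
      exact hp.2 ⟨ω, ω, hωω, hωω, rfl⟩
    exact hp.eq_omega0_add_one hωp hp2
  · rintro rfl
    exact ⟨⟨ω, rfl⟩, ordinalPrime_omega0_add_one, (lt_add_one ω).ne',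
      add_mul_of_isSuccLimit one_add_omega0 isSuccLimit_omega0⟩
end

section
/- If x is an ordinal satisfying x·(ω+1) = (ω+1)·x and x·(ω+1) ≠ x, then x = (ω+1)^i for some natural number i. -/
/-!
Write `x = ω * a + b` with `b` finite. Since `(ω + 1) * ω = ω * ω`, left multiplication by
`ω + 1` only disturbs the finite digit: `(ω + 1) * x = ω * x + c` with `c ∈ {0, 1}`. The hypothesis
becomes `x * ω + x = ω * x + c`, and for infinite `x` we have `x * ω = ω * (a * ω)`, so comparing
base-`ω` digits gives `b = c` and `a * ω + a = x = ω * a + c`: the quotient `a < x` solves the same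
equation. The descent stops at a finite solution, which must be `x = c = 1`, and unwinding it with
`(ω + 1) ^ (i + 1) = ω * (ω + 1) ^ i + 1` gives `x = (ω + 1) ^ i`.
-/
open Ordinal

namespace Ordinal

theorem eq_and_eq_of_mul_add_eq_mul_add {b s t r r' : Ordinal} (hr : r < b) (hr' : r' < b)
    (h : b * s + r = b * t + r') : s = t ∧ r = r' := by
  have hb : b ≠ 0 := (pos_of_gt hr).ne'
  constructor
  · simpa [mul_add_div _ hb, div_eq_zero_of_lt hr, div_eq_zero_of_lt hr'] using
      congrArg (· / b) h
  · simpa [mul_add_mod_self, mod_eq_of_lt hr, mod_eq_of_lt hr'] using congrArg (· % b) h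

theorem add_natCast_mul_omega0 {y : Ordinal} (hy : ω ≤ y) (n : ℕ) : (y + n) * ω = y * ω :=
  add_mul_of_isSuccLimit (natCast_add_of_omega0_le hy n) isSuccLimit_omega0

theorem omega0_add_one_mul_omega0 : (ω + 1) * ω = ω * ω :=
  add_mul_of_isSuccLimit one_add_omega0 isSuccLimit_omega0

theorem omega0_add_one_mul_natCast_succ (n : ℕ) :
    (ω + 1) * (n + 1 : ℕ) = ω * (n + 1 : ℕ) + 1 := by
  rw [Nat.cast_succ, ← Order.succ_eq_add_one (n : Ordinal), add_mul_succ _ one_add_omega0]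

theorem exists_omega0_add_one_mul_eq (x : Ordinal) : ∃ c < ω, (ω + 1) * x = ω * x + c := by
  obtain ⟨n, hn⟩ := lt_omega0.1 (mod_lt x omega0_ne_zero)
  have hx : x = ω * (x / ω) + n := by rw [← hn, div_add_mod]
  have hω : (ω + 1) * (ω * (x / ω)) = ω * (ω * (x / ω)) := by
    rw [← mul_assoc, omega0_add_one_mul_omega0, mul_assoc]
  rcases n with _ | n
  · exact ⟨0, omega0_pos, by rw [hx, Nat.cast_zero, add_zero, add_zero, hω]⟩
  · refine ⟨1, one_lt_omega0, ?_⟩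
    rw [hx, mul_add, hω, omega0_add_one_mul_natCast_succ, mul_add, add_assoc]

theorem omega0_add_one_pow_succ (i : ℕ) : (ω + 1) ^ (i + 1) = ω * (ω + 1) ^ i + 1 := by
  induction i with
  | zero => simp
  | succ i ih =>
    rw [pow_succ', ih, mul_add, ← mul_assoc, omega0_add_one_mul_omega0, mul_assoc, mul_add,
      mul_one, mul_one, ← add_assoc]

theorem div_omega0_of_mul_omega0_add_self_eq {q c : Ordinal} (hc : c < ω) (hq : ω ≤ q)
    (h : q * ω + q = ω * q + c) : q = ω * (q / ω) + c ∧ (q / ω) * ω + q / ω = q := by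
  obtain ⟨n, hn⟩ := lt_omega0.1 (mod_lt q omega0_ne_zero)
  have hq' : ω * (q / ω) + n = q := by rw [← hn, div_add_mod]
  have ha : ω ≤ ω * (q / ω) := le_mul_left ω ((div_pos omega0_ne_zero).2 hq)
  have hqω : q * ω = ω * ((q / ω) * ω) := by
    conv_lhs => rw [← hq']
    rw [add_natCast_mul_omega0 ha, mul_assoc]
  have key : ω * ((q / ω) * ω + q / ω) + n = ω * q + c := by
    rw [mul_add, add_assoc, hq', ← hqω, h]
  obtain ⟨hself, hnc⟩ := eq_and_eq_of_mul_add_eq_mul_add (natCast_lt_omega0 n) hc key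
  exact ⟨by rw [← hnc, hq'], hself⟩

theorem omega0_add_one_pow_of_mul_omega0_add_self_eq {q c : Ordinal} (hc : c < ω) (hq : q ≠ 0)
    (h : q * ω + q = ω * q + c) : c = 1 ∧ ∃ i : ℕ, q = (ω + 1) ^ i := by
  induction q using WellFoundedLT.induction with
  | _ q ih =>
  rcases lt_or_ge q ω with hqω | hqω
  · rw [mul_omega0 (pos_iff_ne_zero.2 hq) hqω] at h
    obtain ⟨h1q, hqc⟩ :=
      eq_and_eq_of_mul_add_eq_mul_add (s := 1) (t := q) hqω hc (by rwa [mul_one])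
    exact ⟨hqc ▸ h1q.symm, 0, by rw [pow_zero, h1q]⟩
  · obtain ⟨hqa, hself⟩ := div_omega0_of_mul_omega0_add_self_eq hc hqω h
    have ha : q / ω ≠ 0 := ((div_pos omega0_ne_zero).2 hqω).ne'
    have hlt : q / ω < q := calc
      q / ω ≤ q / ω * ω := le_mul_left _ omega0_pos
      _ < q / ω * ω + q / ω := lt_add_of_pos_right _ (pos_iff_ne_zero.2 ha)
      _ = q := hself
    obtain ⟨hc1, i, hi⟩ := ih _ hlt ha (by rw [hself, ← hqa])
    exact ⟨hc1, i + 1, by rw [omega0_add_one_pow_succ, ← hi, ← hc1, ← hqa]⟩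

end Ordinal

theorem commuting_with_omega_add_one (x : Ordinal)
    (h₁ : x * (ω + 1) = (ω + 1) * x) (h₂ : x * (ω + 1) ≠ x) :
    ∃ i : ℕ, x = (ω + 1) ^ i := by
  have hx : x ≠ 0 := by
    rintro rfl
    exact h₂ (zero_mul _)
  obtain ⟨c, hc, hmul⟩ := exists_omega0_add_one_mul_eq x
  have h : x * ω + x = ω * x + c := by rw [← mul_add_one, h₁, hmul]
  exact (omega0_add_one_pow_of_mul_omega0_add_self_eq hc hx h).2
end

section
/- For every natural number n ≥ 0, every nonzero ordinal z satisfying z·(ω+1)^n·(ω²+1) = (ω+1)^n·(ω²+1)·z is of the form ((ω+1)^n·(ω²+1))^r for some natural number r. -/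
/-!
Write `X = (ω + 1) ^ n * (ω ^ 2 + 1) = ω ^ (n + 2) + t`, where `t = (ω + 1) ^ n` has normal form
`ω ^ n + ⋯ + ω + 1`.
If `z = ω ^ b * c + s` commutes with `X`, comparing leading Cantor terms of `z * X` and `X * z`
gives `z = 1`, or `c = 1` and `z * t = X * s`. Multiplying `z` on the right by `t` puts
`ω ^ (b + n) + ⋯ + ω ^ (b + 1)` in front of `z`, while multiplying on the left by `X` shifts
every exponent of `s` by `n + 2`; so these terms can be peeled off `X * s` one at a time, and
what remains is `z = X * τ`. Were the remaining part of `s` finite before all those terms are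
gone, `t` would reach `ω ^ (n + 1)`: this is where the gap in the normal form of `X` is used.
Then `τ < z` also commutes with `X`, and induction on `z` finishes.
-/

open Ordinal

universe u

namespace Ordinal

variable {a a' b c c' d e r r' s t v w M : Ordinal}

theorem omega0_opow_mul_add_inj (hc : c ≠ 0) (hcω : c < ω) (hr : r < ω ^ a)
    (hc' : c' ≠ 0) (hcω' : c' < ω) (hr' : r' < ω ^ a')
    (h : ω ^ a * c + r = ω ^ a' * c' + r') : a = a' ∧ c = c' ∧ r = r' := by
  have hCNF := congrArg (CNF ω) h
  rw [CNF.opow_mul_add one_lt_omega0 hc hcω hr,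
    CNF.opow_mul_add one_lt_omega0 hc' hcω' hr'] at hCNF
  obtain ⟨hlead, htail⟩ := List.cons.inj hCNF
  obtain ⟨rfl, rfl⟩ := Prod.mk.inj hlead
  exact ⟨rfl, rfl, by rw [← CNF.foldr ω r, htail, CNF.foldr]⟩

theorem exists_eq_omega0_opow_mul_add (ha : a ≠ 0) :
    ∃ b c s : Ordinal, a = ω ^ b * c + s ∧ c ≠ 0 ∧ c < ω ∧ s < ω ^ b :=
  ⟨log ω a, a / ω ^ log ω a, a % ω ^ log ω a, (div_add_mod _ _).symm,
    (div_opow_log_pos ω ha).ne', div_opow_log_lt a one_lt_omega0,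
    mod_lt _ (opow_ne_zero _ omega0_ne_zero)⟩

theorem mul_omega0_of_opow_le_of_lt (h₁ : ω ^ b ≤ a) (h₂ : a < ω ^ (b + 1)) :
    a * ω = ω ^ (b + 1) := by
  have hb : ω ^ b ≠ 0 := opow_ne_zero _ omega0_ne_zero
  refine le_antisymm ?_ ?_
  · have hk : Order.succ (a / ω ^ b) < ω :=
      isSuccLimit_omega0.succ_lt <| (lt_mul_iff_div_lt hb).1 (by rwa [← opow_add_one])
    calc a * ω ≤ ω ^ b * Order.succ (a / ω ^ b) * ω := by
          gcongr; exact (lt_mul_succ_div a hb).le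
      _ = ω ^ (b + 1) := by
          rw [mul_assoc, mul_omega0 (Order.bot_lt_succ _) hk, opow_add_one]
  · rw [opow_add_one]; gcongr

theorem mul_omega0_opow_of_opow_le_of_lt (h₁ : ω ^ b ≤ a) (h₂ : a < ω ^ (b + 1))
    (hc : c ≠ 0) :
    a * ω ^ c = ω ^ (b + c) := by
  obtain ⟨c, rfl⟩ : ∃ c', c = 1 + c' :=
    ⟨c - 1, (Ordinal.add_sub_cancel_of_le (Order.one_le_iff_ne_zero.2 hc)).symm⟩
  rw [opow_add, opow_one, ← mul_assoc, mul_omega0_of_opow_le_of_lt h₁ h₂, ← opow_add,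
    add_assoc]

theorem opow_add_mul_of_lt_omega0 (ht : t < ω ^ a) (he : e ≠ 0) (heω : e < ω) :
    (ω ^ a + t) * e = ω ^ a * e + t := by
  obtain ⟨m, rfl⟩ := lt_omega0.1 heω
  obtain ⟨m, rfl⟩ := Nat.exists_eq_add_one_of_ne_zero (Nat.cast_ne_zero.1 he)
  clear he heω
  induction m with
  | zero => simp
  | succ m ih =>
    rw [Nat.cast_succ, mul_add_one, ih, mul_add_one, add_assoc, ← add_assoc t,
      add_omega0_opow ht, add_assoc]

/-- `opowSum c k = ω ^ (c + k) + ⋯ + ω ^ (c + 1)`. -/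
noncomputable def opowSum (c : Ordinal) : ℕ → Ordinal
  | 0 => 0
  | k + 1 => ω ^ (c + k + 1) + opowSum c k

theorem opow_le_opowSum_add (hw : ω ^ c ≤ w) : ∀ k : ℕ, ω ^ (c + k) ≤ opowSum c k + w
  | 0 => by rwa [opowSum, Nat.cast_zero, add_zero, zero_add]
  | k + 1 => by
    rw [opowSum, Nat.cast_succ, ← add_assoc]
    exact le_self_add.trans le_self_add

theorem opowSum_add_lt (hw : w < ω ^ (c + 1)) : ∀ k : ℕ, opowSum c k + w < ω ^ (c + k + 1)
  | 0 => by rwa [opowSum, Nat.cast_zero, add_zero, zero_add]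
  | k + 1 => by
    rw [opowSum, add_assoc, ← mul_one (ω ^ (c + k + 1)), Nat.cast_succ, ← add_assoc c]
    exact opow_mul_add_lt_opow one_lt_omega0 (opowSum_add_lt hw k) (lt_add_one _)

theorem mul_omega0_add_one_pow (h₁ : ω ^ c ≤ v) (h₂ : v < ω ^ (c + 1)) :
    ∀ j : ℕ, v * (ω + 1) ^ j = opowSum c j + v
  | 0 => by rw [pow_zero, mul_one, opowSum, zero_add]
  | j + 1 => by
    rw [pow_succ, ← mul_assoc, mul_omega0_add_one_pow h₁ h₂ j, mul_add_one,
      mul_omega0_of_opow_le_of_lt (opow_le_opowSum_add h₁ j) (opowSum_add_lt h₂ j), opowSum]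
    exact (add_assoc _ _ _).symm

theorem omega0_add_one_pow_mem_Ico (n : ℕ) :
    ω ^ (n : Ordinal.{u}) ≤ (ω + 1) ^ n ∧ (ω + 1) ^ n < ω ^ (n + 1 : Ordinal.{u}) := by
  have h₁ : ω ^ (0 : Ordinal.{u}) ≤ 1 := (opow_zero ω).le
  have h₂ : (1 : Ordinal.{u}) < ω ^ (0 + 1 : Ordinal.{u}) := by
    rw [zero_add, opow_one]; exact one_lt_omega0
  have h := mul_omega0_add_one_pow h₁ h₂ n
  rw [one_mul] at h
  rw [h]
  have h₃ := opow_le_opowSum_add h₁ n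
  have h₄ := opowSum_add_lt h₂ n
  rw [zero_add] at h₃ h₄
  exact ⟨h₃, h₄⟩

theorem omega0_add_one_pow_mul (n : ℕ) :
    (ω + 1) ^ n * (ω ^ (2 : Ordinal) + 1) = ω ^ (n + 1 + 1 : Ordinal) + (ω + 1) ^ n := by
  obtain ⟨h₁, h₂⟩ := omega0_add_one_pow_mem_Ico n
  rw [mul_add_one, mul_omega0_opow_of_opow_le_of_lt h₁ h₂ two_ne_zero, add_assoc,
    one_add_one_eq_two]

theorem opow_add_mul_opow_mul_add (ht : t < ω ^ a) (hd : d ≠ 0) (hs : s < ω ^ d) :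
    (ω ^ a + t) * (ω ^ d * e + s) = ω ^ (a + d) * e + (ω ^ a + t) * s ∧
      (ω ^ a + t) * s < ω ^ (a + d) := by
  have hX₂ : ω ^ a + t < ω ^ (a + 1) := by
    simpa only [mul_one] using opow_mul_add_lt_opow one_lt_omega0 ht (lt_add_one a)
  have hX := mul_omega0_opow_of_opow_le_of_lt le_self_add hX₂ hd
  refine ⟨by rw [mul_add, ← mul_assoc, hX], ?_⟩
  rw [← hX]
  exact (mul_lt_mul_iff_of_pos_left ((opow_pos a omega0_pos).trans_le le_self_add)).2 hs

theorem exists_mul_eq_of_mul_eq_opowSum_add (ht : t < ω ^ M) (hw₁ : ω ^ c ≤ w)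
    (hw₂ : w < ω ^ (c + 1)) :
    ∀ (k : ℕ) (σ : Ordinal), (ω ^ (M + 1) + t) * σ = opowSum c k + w →
      ∃ τ, (ω ^ (M + 1) + t) * τ = w
  | 0, σ, h => ⟨σ, by rwa [opowSum, zero_add] at h⟩
  | k + 1, σ, h => by
    have ht' : t < ω ^ (M + 1) := ht.trans_le (opow_le_opow_right omega0_pos le_self_add)
    have hσ : σ ≠ 0 := by
      rintro rfl
      rw [mul_zero] at h
      exact (opow_pos c omega0_pos).not_ge (hw₁.trans (le_add_self.trans h.ge))
    obtain ⟨d, e, s, rfl, he, heω, hs⟩ := exists_eq_omega0_opow_mul_add hσ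
    rw [opowSum, ← mul_one (ω ^ (c + k + 1)), add_assoc] at h
    have hrem := opowSum_add_lt hw₂ k
    rcases eq_or_ne d 0 with rfl | hd
    · rw [opow_zero, Order.lt_one_iff] at hs
      subst hs
      rw [opow_zero, one_mul, add_zero, opow_add_mul_of_lt_omega0 ht' he heω] at h
      obtain ⟨hM, -, rfl⟩ :=
        omega0_opow_mul_add_inj he heω ht' one_ne_zero one_lt_omega0 hrem h
      obtain rfl : M = c + k := by simpa using hM
      exact absurd ht (opow_le_opowSum_add hw₁ k).not_gt
    · obtain ⟨hXσ, hXs⟩ := opow_add_mul_opow_mul_add ht' hd hs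
      rw [hXσ] at h
      obtain ⟨-, -, h'⟩ :=
        omega0_opow_mul_add_inj he heω hXs one_ne_zero one_lt_omega0 hrem h
      exact exists_mul_eq_of_mul_eq_opowSum_add ht hw₁ hw₂ k s h'

theorem eq_one_or_exists_mul_eq_of_commute {n : ℕ} {z : Ordinal} (hz : z ≠ 0)
    (h : z * (ω ^ (n + 1 + 1 : Ordinal) + (ω + 1) ^ n) =
      (ω ^ (n + 1 + 1 : Ordinal) + (ω + 1) ^ n) * z) :
    z = 1 ∨ ∃ τ, (ω ^ (n + 1 + 1 : Ordinal) + (ω + 1) ^ n) * τ = z := by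
  obtain ⟨-, ht₂⟩ := omega0_add_one_pow_mem_Ico n
  have ht₃ : (ω + 1) ^ n < ω ^ (n + 1 + 1 : Ordinal) :=
    ht₂.trans ((opow_lt_opow_iff_right one_lt_omega0).2 (lt_add_one _))
  obtain ⟨b, c, s, rfl, hc, hcω, hs⟩ := exists_eq_omega0_opow_mul_add hz
  have hz₁ : ω ^ b ≤ ω ^ b * c + s := (le_mul_left _ (pos_iff_ne_zero.2 hc)).trans le_self_add
  have hz₂ : ω ^ b * c + s < ω ^ (b + 1) := opow_mul_add_lt_opow hcω hs (lt_add_one b)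
  have hn : (n + 1 : Ordinal) ≠ 0 := (add_pos_of_right one_pos _).ne'
  have hzt : (ω ^ b * c + s) * (ω + 1) ^ n < ω ^ (b + (n + 1 + 1)) :=
    calc (ω ^ b * c + s) * (ω + 1) ^ n
        < (ω ^ b * c + s) * ω ^ (n + 1 : Ordinal) :=
          (mul_lt_mul_iff_of_pos_left (pos_iff_ne_zero.2 hz)).2 ht₂
      _ = ω ^ (b + (n + 1)) := mul_omega0_opow_of_opow_le_of_lt hz₁ hz₂ hn
      _ < ω ^ (b + (n + 1 + 1)) :=
          (opow_lt_opow_iff_right one_lt_omega0).2 ((add_lt_add_iff_left b).2 (lt_add_one _))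
  rw [mul_add, mul_omega0_opow_of_opow_le_of_lt hz₁ hz₂ (add_pos_of_right one_pos _).ne',
    ← mul_one (ω ^ (b + _))] at h
  rcases eq_or_ne b 0 with rfl | hb
  · rw [opow_zero, Order.lt_one_iff] at hs
    subst hs
    rw [opow_zero, one_mul, add_zero] at h hzt ⊢
    rw [opow_add_mul_of_lt_omega0 ht₃ hc hcω] at h
    obtain ⟨-, hc₁, -⟩ :=
      omega0_opow_mul_add_inj one_ne_zero one_lt_omega0 hzt hc hcω ht₃ h
    exact .inl hc₁.symm
  · obtain ⟨hXz, hXs⟩ := opow_add_mul_opow_mul_add ht₃ hb hs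
    rw [hXz] at h
    obtain ⟨-, rfl, hzt_eq⟩ :=
      omega0_opow_mul_add_inj one_ne_zero one_lt_omega0 hzt hc hcω hXs h
    rw [mul_omega0_add_one_pow hz₁ hz₂ n] at hzt_eq
    exact .inr (exists_mul_eq_of_mul_eq_opowSum_add ht₂ hz₁ hz₂ n s hzt_eq.symm)

theorem exists_pow_eq_of_commute {X : Ordinal} (hX : 1 < X)
    (hstep : ∀ z, z ≠ 0 → z * X = X * z → z = 1 ∨ ∃ τ, X * τ = z)
    (z : Ordinal) (hz : z ≠ 0) (h : z * X = X * z) : ∃ r : ℕ, z = X ^ r := by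
  induction z using WellFoundedLT.induction with
  | ind z ih =>
  obtain rfl | ⟨τ, rfl⟩ := hstep z hz h
  · exact ⟨0, (pow_zero X).symm⟩
  have hX₀ : X ≠ 0 := (zero_lt_one.trans hX).ne'
  have hτ : τ ≠ 0 := right_ne_zero_of_mul hz
  have hτX : τ * X = X * τ := mul_left_cancel₀ hX₀ (by rw [← mul_assoc, h])
  have hτ_lt : τ < X * τ := by
    refine (le_mul_right τ (zero_lt_one.trans hX)).lt_of_ne fun heq => ?_
    have : τ < τ * X := lt_mul_of_one_lt_right (pos_iff_ne_zero.2 hτ) hX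
    exact this.ne' (hτX.trans heq.symm)
  obtain ⟨r, rfl⟩ := ih τ hτ_lt hτ hτX
  exact ⟨r + 1, (pow_succ' X r).symm⟩

end Ordinal

theorem commuting_solutions_are_powers (n : ℕ) (z : Ordinal) (hz : z ≠ 0)
    (h : z * ((ω + 1) ^ n * (ω ^ (2 : Ordinal) + 1)) =
         ((ω + 1) ^ n * (ω ^ (2 : Ordinal) + 1)) * z) :
    ∃ r : ℕ, z = ((ω + 1) ^ n * (ω ^ (2 : Ordinal) + 1)) ^ r := by
  rw [omega0_add_one_pow_mul] at h ⊢
  refine exists_pow_eq_of_commute ?_ (fun _ => eq_one_or_exists_mul_eq_of_commute) z hz h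
  exact one_lt_omega0.trans_le ((left_le_opow ω (add_pos_of_right one_pos _)).trans le_self_add)
end

section
/- Every prime ordinal is either a finite prime natural number, or of the form ω^μ + 1 for some ordinal μ > 0, or of the form ω^(ω^ξ) for some ordinal ξ. -/
open Ordinal

/-!
Finite primes are the prime numbers. An infinite `α` is `ω * q + n` with `n` finite and
`ω * q = ω ^ ν * (t + 1)`, `ν > 0`. Every deviation from the claimed shapes yields a
factorization into smaller ordinals: `n * (ω * q + 1)` if `n ≥ 2`; `ω ^ ν * (t + 1)` or
`(ω ^ ν + 1) * (t + 1)` if `t > 0`; and `ω ^ a * ω ^ b` if `α = ω ^ ν` with `ν = a + b`,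
`a, b < ν`. The additively principal `ν > 0` are exactly the powers `ω ^ ξ`.
-/

namespace Ordinal

/-- `ν` is the last exponent of the Cantor normal form of `b`: peel off the leading term
`ω ^ log ω b * (m + 1)` and recurse on the remainder. -/
theorem exists_eq_omega0_opow_mul_add_one {b : Ordinal} (hb : b ≠ 0) :
    ∃ ν t : Ordinal, b = ω ^ ν * (t + 1) := by
  induction b using WellFoundedLT.induction with | _ b ih => ?_
  set L := log ω b
  obtain ⟨n, hn⟩ := lt_omega0.1 (div_opow_log_lt b one_lt_omega0)
  obtain ⟨m, rfl⟩ : ∃ m, n = m + 1 :=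
    Nat.exists_eq_add_one.2 (by exact_mod_cast hn ▸ div_opow_log_pos ω hb)
  have hdecomp : b = ω ^ L * (m + 1) + b % ω ^ L := by
    rw [← Nat.cast_add_one, ← hn, div_add_mod]
  rcases eq_or_ne (b % ω ^ L) 0 with hr | hr
  · exact ⟨L, m, by rwa [hr, add_zero] at hdecomp⟩
  obtain ⟨ν, t, hνt⟩ := ih _ (mod_opow_log_lt_self ω hb) hr
  have hνL : ν ≤ L := by
    rw [← opow_le_opow_iff_right one_lt_omega0]
    calc ω ^ ν ≤ b % ω ^ L := hνt ▸ le_mul_left _ (by positivity)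
      _ ≤ ω ^ L := (mod_lt b (opow_ne_zero L omega0_ne_zero)).le
  refine ⟨ν, ω ^ (L - ν) * (m + 1) + t, ?_⟩
  rw [hdecomp, hνt, add_assoc, mul_add (ω ^ ν) (ω ^ (L - ν) * _), ← mul_assoc, ← opow_add,
    Ordinal.add_sub_cancel_of_le hνL]

theorem lt_mul_add_one {a t : Ordinal} (ha : 0 < a) (ht : t ≠ 0) : a < a * (t + 1) :=
  lt_mul_of_one_lt_right ha (by simpa [Order.one_le_iff_ne_zero] using ht)

theorem add_one_lt_mul_add_one {a : Ordinal} (ha : 1 < a) (t : Ordinal) :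
    t + 1 < a * (t + 1) :=
  calc t + 1 < t + a := by gcongr
    _ ≤ a * t + a := by gcongr; exact le_mul_right t (zero_lt_one.trans ha)
    _ = a * (t + 1) := (mul_add_one a t).symm

end Ordinal

namespace OrdinalPrime

theorem ne_mul {α β γ : Ordinal} (h : OrdinalPrime α) (hβ : β < α) (hγ : γ < α) :
    α ≠ β * γ :=
  fun e ↦ h.2 ⟨β, γ, hβ, hγ, e⟩

theorem natCast_prime {n : ℕ} (h : OrdinalPrime n) : n.Prime := by
  refine Nat.prime_iff_not_exists_mul_eq.2 ⟨by exact_mod_cast h.1, ?_⟩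
  rintro ⟨a, b, ha, hb, rfl⟩
  exact h.ne_mul (β := a) (γ := b) (by exact_mod_cast ha) (by exact_mod_cast hb)
    (by push_cast; rfl)

/-- For `2 ≤ n`, `l + n = n * (l + 1)` because `n * l = l` when `ω ∣ l`. -/
theorem le_one_of_add_natCast {l : Ordinal} {n : ℕ} (h : OrdinalPrime (l + n)) (hl : l ≠ 0)
    (hωl : ω ∣ l) : n ≤ 1 := by
  by_contra! hn
  have hnl : (n : Ordinal) < l := (natCast_lt_omega0 n).trans_le (le_of_dvd hl hωl)
  refine h.ne_mul (β := n) (γ := l + 1) (hnl.trans_le le_self_add)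
    (by gcongr; exact_mod_cast hn) ?_
  rw [mul_add_one, mul_omega0_dvd (by exact_mod_cast hn.pos) (natCast_lt_omega0 n) hωl]

theorem eq_zero_of_omega0_opow_mul_add_one {ν t : Ordinal} (h : OrdinalPrime (ω ^ ν * (t + 1)))
    (hν : 0 < ν) : t = 0 := by
  by_contra! ht
  have hone : 1 < ω ^ ν := one_lt_omega0.trans_le (left_le_opow ω hν)
  exact h.ne_mul (lt_mul_add_one (zero_lt_one.trans hone) ht) (add_one_lt_mul_add_one hone t) rfl

/-- Here `ω ^ ν * (t + 1) + 1 = (ω ^ ν + 1) * (t + 1)`, as `1 + ω ^ ν = ω ^ ν`. -/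
theorem eq_zero_of_omega0_opow_mul_add_one_add_one {ν t : Ordinal}
    (h : OrdinalPrime (ω ^ ν * (t + 1) + 1)) (hν : 0 < ν) : t = 0 := by
  by_contra! ht
  have hων : ω ≤ ω ^ ν := left_le_opow ω hν
  refine h.ne_mul (β := ω ^ ν + 1) (γ := t + 1) ?_ ?_ ?_
  · simpa using lt_mul_add_one (opow_pos ν omega0_pos) ht
  · exact (add_one_lt_mul_add_one (one_lt_omega0.trans_le hων) t).trans_le le_self_add
  · exact (add_mul_add_one t (one_add_of_omega0_le hων)).symm

theorem isPrincipal_add_of_eq_omega0_opow {ν : Ordinal} (h : OrdinalPrime (ω ^ ν)) :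
    IsPrincipal (· + ·) ν := by
  refine isPrincipal_add_iff_add_lt_ne_self.2 fun a ha b hb e ↦
    h.ne_mul ?_ ?_ (e ▸ opow_add ω a b)
  all_goals exact (opow_lt_opow_iff_right one_lt_omega0).2 ‹_›

end OrdinalPrime

theorem prime_ordinal_classification (α : Ordinal) (h : OrdinalPrime α) :
    (∃ p : ℕ, Nat.Prime p ∧ α = p) ∨
    (∃ μ : Ordinal, 0 < μ ∧ α = ω ^ μ + 1) ∨
    (∃ ξ : Ordinal, α = ω ^ ω ^ ξ) := by
  rcases lt_or_ge α ω with hfin | hinf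
  · obtain ⟨n, rfl⟩ := lt_omega0.1 hfin
    exact .inl ⟨n, h.natCast_prime, rfl⟩
  have hq : α / ω ≠ 0 := ((div_pos omega0_ne_zero).2 hinf).ne'
  obtain ⟨n, hn⟩ := lt_omega0.1 (mod_lt α omega0_ne_zero)
  have hα : α = ω * (α / ω) + n := by rw [← hn, div_add_mod]
  have hn1 : n ≤ 1 :=
    (hα ▸ h).le_one_of_add_natCast (mul_ne_zero omega0_ne_zero hq) (dvd_mul_right ω _)
  obtain ⟨μ, t, hμt⟩ := exists_eq_omega0_opow_mul_add_one hq
  rw [hμt, ← mul_assoc, ← opow_one_add] at hα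
  have hν : 0 < 1 + μ := by positivity
  interval_cases n
  · rw [Nat.cast_zero, add_zero] at hα
    subst hα
    obtain rfl := h.eq_zero_of_omega0_opow_mul_add_one hν
    rw [zero_add, mul_one] at h ⊢
    obtain ⟨ξ, hξ⟩ := (isPrincipal_add_iff_zero_or_omega0_opow.1
      h.isPrincipal_add_of_eq_omega0_opow).resolve_left hν.ne'
    exact .inr (.inr ⟨ξ, by rw [← hξ]⟩)
  · rw [Nat.cast_one] at hα
    subst hα
    obtain rfl := h.eq_zero_of_omega0_opow_mul_add_one_add_one hν
    exact .inr (.inl ⟨1 + μ, hν, by rw [zero_add, mul_one]⟩)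
end

section
/- For every ordinal ξ, the ordinal ω^(ω^ξ) is multiplicatively prime: it cannot be written as a product of two strictly smaller ordinals. -/
/-!
The ordinal `ω ^ ω ^ ξ` is closed under multiplication of smaller ordinals. In a
factorisation `ω ^ ω ^ ξ = β * γ` both factors are nonzero, hence at most the product; if both
were strictly smaller, closure would make their product strictly smaller too.
-/

namespace Ordinal

theorem eq_or_eq_of_isPrincipal_mul_of_eq_mul {α β γ : Ordinal} (hα : IsPrincipal (· * ·) α)
    (h : α = β * γ) : β = α ∨ γ = α := by
  rcases eq_or_ne α 0 with rfl | hα0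
  · exact mul_eq_zero.mp h.symm
  obtain ⟨hβ0, hγ0⟩ : β ≠ 0 ∧ γ ≠ 0 := by simpa [h] using hα0
  have hβα : β ≤ α := h ▸ le_mul_left β (pos_iff_ne_zero.mpr hγ0)
  have hγα : γ ≤ α := h ▸ le_mul_right γ (pos_iff_ne_zero.mpr hβ0)
  by_contra! hne
  exact (hα (hβα.lt_of_ne hne.1) (hγα.lt_of_ne hne.2)).ne h.symm

end Ordinal

open Ordinal

theorem omega_omega_pow_prime (ξ : Ordinal) :
    1 < ω ^ ω ^ ξ ∧
    ∀ β γ : Ordinal, ω ^ ω ^ ξ = β * γ → β = ω ^ ω ^ ξ ∨ γ = ω ^ ω ^ ξ :=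
  ⟨one_lt_opow.mpr ⟨one_lt_omega0, opow_ne_zero ξ omega0_ne_zero⟩,
    fun _ _ => eq_or_eq_of_isPrincipal_mul_of_eq_mul (isPrincipal_mul_omega0_opow_opow ξ)⟩
end
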